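/- arXiv:2501.18410 — 2 statements merged into one kernel-verified Lean document; each statement's English description precedes it below -/
import Mathlib

section
/- Let F be a field of characteristic 0 and let A be an F-vector space with a bilinear multiplication ⋆. Then the following are equivalent: (1) for all a,b,c ∈ A, a⋆(b⋆c) = (c⋆b)⋆a and (a⋆b)⋆c − a⋆(b⋆c) = (1/2)(a⋆c)⋆b − (1/2)(c⋆a)⋆b; (2) setting a·b = (1/2)(a⋆b + b⋆a) and [a,b] = (1/2)(a⋆b − b⋆a), the product · is commutative and associative, the bracket [,] is antisymmetric and satisfies the Jacobi identity, and a·[b,c] = 0 and [a·b,c] = 0 hold for all a,b,c ∈ A. -/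
/-!
Write `a ⋆ b = a · b + [a, b]`. Expanding, `a ⋆ (b ⋆ c) - (c ⋆ b) ⋆ a = 2 (a · [b, c] + [a, b · c])`,
and the two summands are antisymmetric, resp. symmetric, in `b, c`; so the first identity says
exactly that `a · [b, c] = 0 = [a · b, c]`. Given this, `(a ⋆ b) ⋆ c = (a · b) · c + [[a, b], c]` and
`a ⋆ (b ⋆ c) = a · (b · c) + [a, [b, c]]`, and the second identity becomes
`associator + jacobiator = 0`. Summing the latter over the cyclic permutations of `a, b, c` kills
the associator of the commutative product and triples the cyclically invariant jacobiator, so in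
characteristic `≠ 3` both vanish.
-/

namespace LinearMap

variable {F A : Type*} [Field F] [AddCommGroup A] [Module F A]

section Polarization

variable (s : A →ₗ[F] A →ₗ[F] A)

def polarMul : A →ₗ[F] A →ₗ[F] A := (2 : F)⁻¹ • (s + s.flip)

def polarBracket : A →ₗ[F] A →ₗ[F] A := (2 : F)⁻¹ • (s - s.flip)

theorem polarMul_apply (a b : A) : s.polarMul a b = (2 : F)⁻¹ • (s a b + s b a) := rfl

theorem polarBracket_apply (a b : A) : s.polarBracket a b = (2 : F)⁻¹ • (s a b - s b a) := rfl

theorem polarMul_comm (a b : A) : s.polarMul a b = s.polarMul b a := by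
  rw [polarMul_apply, polarMul_apply, add_comm]

theorem polarBracket_antisymm (a b : A) : s.polarBracket a b = -s.polarBracket b a := by
  rw [polarBracket_apply, polarBracket_apply, ← smul_neg, neg_sub]

variable {s}

theorem polarMul_add_polarBracket (h2 : (2 : F) ≠ 0) (a b : A) :
    s.polarMul a b + s.polarBracket a b = s a b := by
  rw [polarMul_apply, polarBracket_apply, ← smul_add, add_add_sub_cancel, ← two_smul F,
    smul_smul, inv_mul_cancel₀ h2, one_smul]

theorem polarMul_sub_polarBracket (h2 : (2 : F) ≠ 0) (a b : A) :
    s.polarMul a b - s.polarBracket a b = s b a := by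
  rw [polarMul_comm, polarBracket_antisymm, sub_neg_eq_add, polarMul_add_polarBracket h2]

theorem two_smul_polarBracket (h2 : (2 : F) ≠ 0) (a b : A) :
    (2 : F) • s.polarBracket a b = s a b - s b a := by
  rw [polarBracket_apply, smul_smul, mul_inv_cancel₀ h2, one_smul]

end Polarization

section Identities

def associator (μ : A →ₗ[F] A →ₗ[F] A) (a b c : A) : A := μ (μ a b) c - μ a (μ b c)

def jacobiator (β : A →ₗ[F] A →ₗ[F] A) (a b c : A) : A :=
  β (β a b) c + β (β b c) a + β (β c a) b

variable {μ β : A →ₗ[F] A →ₗ[F] A}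

theorem associator_add_associator_add_associator (hμ : ∀ a b, μ a b = μ b a) (a b c : A) :
    μ.associator a b c + μ.associator b c a + μ.associator c a b = 0 := by
  rw [associator, associator, associator, hμ a (μ b c), hμ b (μ c a), hμ c (μ a b)]
  abel

theorem jacobiator_cyclic (a b c : A) : β.jacobiator b c a = β.jacobiator a b c := by
  rw [jacobiator, jacobiator]
  abel

theorem forall_associator_add_jacobiator_eq_zero_iff (h3 : (3 : F) ≠ 0)
    (hμ : ∀ a b, μ a b = μ b a) :
    (∀ a b c : A, μ.associator a b c + β.jacobiator a b c = 0) ↔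
      (∀ a b c : A, μ.associator a b c = 0) ∧ ∀ a b c : A, β.jacobiator a b c = 0 := by
  refine ⟨fun h => ?_, fun ⟨hμ₀, hβ₀⟩ a b c => by rw [hμ₀, hβ₀, add_zero]⟩
  have hβ₀ (a b c : A) : β.jacobiator a b c = 0 := by
    have h3J : (3 : F) • β.jacobiator a b c = 0 := calc
      (3 : F) • β.jacobiator a b c
          = (μ.associator a b c + β.jacobiator a b c) + (μ.associator b c a + β.jacobiator b c a)
            + (μ.associator c a b + β.jacobiator c a b)
            - (μ.associator a b c + μ.associator b c a + μ.associator c a b) := by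
        rw [jacobiator_cyclic a b c, ← jacobiator_cyclic c a b]
        module
      _ = 0 := by rw [h, h, h, associator_add_associator_add_associator hμ]; abel
    exact (smul_eq_zero.1 h3J).resolve_left h3
  exact ⟨fun a b c => by simpa only [hβ₀, add_zero] using h a b c, hβ₀⟩

end Identities

section Compatibility

variable {s : A →ₗ[F] A →ₗ[F] A}

theorem apply_apply_sub_apply_apply (h2 : (2 : F) ≠ 0) (a b c : A) :
    s a (s b c) - s (s c b) a =
      (2 : F) • (s.polarMul a (s.polarBracket b c) + s.polarBracket a (s.polarMul b c)) := by
  rw [← polarMul_sub_polarBracket h2 a (s c b), ← polarMul_sub_polarBracket h2 b c,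
    ← polarMul_add_polarBracket h2 a (s b c), ← polarMul_add_polarBracket h2 b c]
  simp only [map_add, map_sub]
  module

theorem forall_apply_apply_eq_iff (h2 : (2 : F) ≠ 0) :
    (∀ a b c : A, s a (s b c) = s (s c b) a) ↔
      (∀ a b c : A, s.polarMul a (s.polarBracket b c) = 0) ∧
        ∀ a b c : A, s.polarBracket (s.polarMul a b) c = 0 := by
  have hP (a b c : A) : s a (s b c) = s (s c b) a ↔
      s.polarMul a (s.polarBracket b c) + s.polarBracket a (s.polarMul b c) = 0 := by
    rw [← sub_eq_zero, apply_apply_sub_apply_apply h2, smul_eq_zero, or_iff_right h2]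
  simp only [hP]
  constructor
  · intro h
    have hμβ (a b c : A) : s.polarMul a (s.polarBracket b c) = 0 := by
      have hswap := h a c b
      rw [polarBracket_antisymm s c b, polarMul_comm s c b, map_neg] at hswap
      have h2X : (2 : F) • s.polarMul a (s.polarBracket b c) = 0 := by
        linear_combination (norm := module) h a b c - hswap
      exact (smul_eq_zero.1 h2X).resolve_left h2
    refine ⟨hμβ, fun a b c => ?_⟩
    rw [polarBracket_antisymm, neg_eq_zero, ← h c a b, hμβ, zero_add]
  · rintro ⟨hμβ, hβμ⟩ a b c
    rw [hμβ, polarBracket_antisymm, hβμ, neg_zero, zero_add]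

theorem apply_polarMul_left (hβμ : ∀ a b c : A, s.polarBracket (s.polarMul a b) c = 0)
    (h2 : (2 : F) ≠ 0) (a b c : A) : s (s.polarMul a b) c = s.polarMul (s.polarMul a b) c := by
  rw [← polarMul_add_polarBracket h2, hβμ, add_zero]

theorem apply_polarBracket_left (hμβ : ∀ a b c : A, s.polarMul a (s.polarBracket b c) = 0)
    (h2 : (2 : F) ≠ 0) (a b c : A) :
    s (s.polarBracket a b) c = s.polarBracket (s.polarBracket a b) c := by
  rw [← polarMul_add_polarBracket h2, polarMul_comm, hμβ, zero_add]

theorem apply_polarMul_right (hβμ : ∀ a b c : A, s.polarBracket (s.polarMul a b) c = 0)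
    (h2 : (2 : F) ≠ 0) (a b c : A) : s a (s.polarMul b c) = s.polarMul a (s.polarMul b c) := by
  rw [← polarMul_add_polarBracket h2, polarBracket_antisymm, hβμ, neg_zero, add_zero]

theorem apply_polarBracket_right (hμβ : ∀ a b c : A, s.polarMul a (s.polarBracket b c) = 0)
    (h2 : (2 : F) ≠ 0) (a b c : A) :
    s a (s.polarBracket b c) = s.polarBracket a (s.polarBracket b c) := by
  rw [← polarMul_add_polarBracket h2, hμβ, zero_add]

theorem apply_apply_left_eq (hμβ : ∀ a b c : A, s.polarMul a (s.polarBracket b c) = 0)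
    (hβμ : ∀ a b c : A, s.polarBracket (s.polarMul a b) c = 0) (h2 : (2 : F) ≠ 0) (a b c : A) :
    s (s a b) c = s.polarMul (s.polarMul a b) c + s.polarBracket (s.polarBracket a b) c := by
  rw [← polarMul_add_polarBracket h2 a b, map_add, add_apply, apply_polarMul_left hβμ h2,
    apply_polarBracket_left hμβ h2]

theorem apply_apply_right_eq (hμβ : ∀ a b c : A, s.polarMul a (s.polarBracket b c) = 0)
    (hβμ : ∀ a b c : A, s.polarBracket (s.polarMul a b) c = 0) (h2 : (2 : F) ≠ 0) (a b c : A) :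
    s a (s b c) = s.polarMul a (s.polarMul b c) + s.polarBracket a (s.polarBracket b c) := by
  rw [← polarMul_add_polarBracket h2 b c, map_add, apply_polarMul_right hβμ h2,
    apply_polarBracket_right hμβ h2]

theorem inv_two_smul_apply_sub_inv_two_smul_apply (h2 : (2 : F) ≠ 0) (a b c : A) :
    (2 : F)⁻¹ • s (s a b) c - (2 : F)⁻¹ • s (s b a) c = s (s.polarBracket a b) c := by
  rw [← smul_sub, ← sub_apply, ← map_sub, ← two_smul_polarBracket h2, map_smul, smul_apply,
    smul_smul, inv_mul_cancel₀ h2, one_smul]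

theorem forall_apply_apply_sub_eq_iff (hμβ : ∀ a b c : A, s.polarMul a (s.polarBracket b c) = 0)
    (hβμ : ∀ a b c : A, s.polarBracket (s.polarMul a b) c = 0) (h2 : (2 : F) ≠ 0) :
    (∀ a b c : A, s (s a b) c - s a (s b c) =
        (2 : F)⁻¹ • s (s a c) b - (2 : F)⁻¹ • s (s c a) b) ↔
      ∀ a b c : A, s.polarMul.associator a b c + s.polarBracket.jacobiator a b c = 0 := by
  refine forall₃_congr fun a b c => ?_
  rw [← sub_eq_zero, inv_two_smul_apply_sub_inv_two_smul_apply h2,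
    apply_apply_left_eq hμβ hβμ h2, apply_apply_right_eq hμβ hβμ h2,
    apply_polarBracket_left hμβ h2, associator, jacobiator,
    polarBracket_antisymm s a (s.polarBracket b c), polarBracket_antisymm s a c, map_neg,
    neg_apply]
  abel_nf

end Compatibility

end LinearMap

theorem stmt_11 (F : Type*) [Field F] [CharZero F]
    (A : Type*) [AddCommGroup A] [Module F A]
    (star : A →ₗ[F] A →ₗ[F] A)
    (cdot lb : A → A → A)
    (hcdot : ∀ a b : A, cdot a b = (2 : F)⁻¹ • (star a b + star b a))
    (hlb : ∀ a b : A, lb a b = (2 : F)⁻¹ • (star a b - star b a)) :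
    ((∀ a b c : A, star a (star b c) = star (star c b) a) ∧
     (∀ a b c : A, star (star a b) c - star a (star b c)
        = (2 : F)⁻¹ • star (star a c) b - (2 : F)⁻¹ • star (star c a) b))
    ↔
    ((∀ a b : A, cdot a b = cdot b a) ∧
     (∀ a b c : A, cdot (cdot a b) c = cdot a (cdot b c)) ∧
     (∀ a b : A, lb a b = - lb b a) ∧
     (∀ a b c : A, lb (lb a b) c + lb (lb b c) a + lb (lb c a) b = 0) ∧
     (∀ a b c : A, cdot a (lb b c) = 0) ∧
     (∀ a b c : A, lb (cdot a b) c = 0)) := by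
  obtain rfl : cdot = fun a b => star.polarMul a b := funext₂ hcdot
  obtain rfl : lb = fun a b => star.polarBracket a b := funext₂ hlb
  have h2 : (2 : F) ≠ 0 := two_ne_zero
  have hassoc_jacobi := LinearMap.forall_associator_add_jacobiator_eq_zero_iff
    (β := star.polarBracket) three_ne_zero (LinearMap.polarMul_comm star)
  simp only [LinearMap.associator, sub_eq_zero] at hassoc_jacobi
  constructor
  · rintro ⟨hleft, hmixed⟩
    obtain ⟨hμβ, hβμ⟩ := (LinearMap.forall_apply_apply_eq_iff h2).1 hleft
    obtain ⟨hassoc, hjacobi⟩ :=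
      hassoc_jacobi.1 ((LinearMap.forall_apply_apply_sub_eq_iff hμβ hβμ h2).1 hmixed)
    exact ⟨LinearMap.polarMul_comm star, hassoc, LinearMap.polarBracket_antisymm star, hjacobi,
      hμβ, hβμ⟩
  · rintro ⟨-, hassoc, -, hjacobi, hμβ, hβμ⟩
    exact ⟨(LinearMap.forall_apply_apply_eq_iff h2).2 ⟨hμβ, hβμ⟩,
      (LinearMap.forall_apply_apply_sub_eq_iff hμβ hβμ h2).2 (hassoc_jacobi.2 ⟨hassoc, hjacobi⟩)⟩
end

section
/- Let F be a field of characteristic 0 and let P be a generalized Poisson algebra over F: a commutative associative product ·, a Lie bracket [,], and an F-linear derivation D of both products satisfying [a·b,c] = a·[b,c] + [a,c]·b + a·b·D(c) for all a,b,c ∈ P. Let A and B be abelian subalgebras of P (x·y = 0 and [x,y] = 0 for all x,y in A, and likewise in B), and suppose P = A + B. Then [c₁·c₂·c₃, c₄] = 0 for all c₁,c₂,c₃,c₄ ∈ P. -/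
/-! Write every element as `a + b` with `a ∈ A`, `b ∈ B`. Among three factors taken from `A ∪ B`
two lie in the same abelian subalgebra, so by commutativity and associativity their product, and
hence the whole triple product, vanishes. Trilinearity then gives `P · P · P = 0`, and the bracket
of `0` with anything is `0`. -/

section

variable {R M : Type*} [CommSemiring R] [AddCommMonoid M] [Module R M]

theorem LinearMap.eq_zero_of_forall_mem_or_mem {N : Type*} [AddCommMonoid N] [Module R N]
    {A B : Set M} (hsum : ∀ p : M, ∃ a ∈ A, ∃ b ∈ B, p = a + b) (f : M →ₗ[R] N)
    (hf : ∀ x, x ∈ A ∨ x ∈ B → f x = 0) (p : M) : f p = 0 := by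
  obtain ⟨a, ha, b, hb, rfl⟩ := hsum p
  rw [map_add, hf a (Or.inl ha), hf b (Or.inr hb), add_zero]

variable (mul : M →ₗ[R] M →ₗ[R] M)
  (hcomm : ∀ a b : M, mul a b = mul b a)
  (hassoc : ∀ a b c : M, mul (mul a b) c = mul a (mul b c))
include hcomm hassoc

theorem mul_mul_eq_zero_of_two_mem {S : Set M} (hS : ∀ x ∈ S, ∀ y ∈ S, mul x y = 0)
    {x y z : M} (h : x ∈ S ∧ y ∈ S ∨ x ∈ S ∧ z ∈ S ∨ y ∈ S ∧ z ∈ S) :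
    mul (mul x y) z = 0 := by
  rcases h with ⟨hx, hy⟩ | ⟨hx, hz⟩ | ⟨hy, hz⟩
  · rw [hS x hx y hy, map_zero, LinearMap.zero_apply]
  · rw [hcomm x y, hassoc, hS x hx z hz, map_zero]
  · rw [hassoc, hS y hy z hz, map_zero]

theorem mul_mul_eq_zero_of_mem_or_mem {A B : Set M}
    (hA : ∀ x ∈ A, ∀ y ∈ A, mul x y = 0) (hB : ∀ x ∈ B, ∀ y ∈ B, mul x y = 0)
    {x y z : M} (hx : x ∈ A ∨ x ∈ B) (hy : y ∈ A ∨ y ∈ B) (hz : z ∈ A ∨ z ∈ B) :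
    mul (mul x y) z = 0 := by
  have : (x ∈ A ∧ y ∈ A ∨ x ∈ A ∧ z ∈ A ∨ y ∈ A ∧ z ∈ A) ∨
      (x ∈ B ∧ y ∈ B ∨ x ∈ B ∧ z ∈ B ∨ y ∈ B ∧ z ∈ B) := by
    tauto
  rcases this with h | h
  exacts [mul_mul_eq_zero_of_two_mem mul hcomm hassoc hA h,
    mul_mul_eq_zero_of_two_mem mul hcomm hassoc hB h]

theorem mul_mul_eq_zero_of_forall_eq_add {A B : Set M}
    (hA : ∀ x ∈ A, ∀ y ∈ A, mul x y = 0) (hB : ∀ x ∈ B, ∀ y ∈ B, mul x y = 0)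
    (hsum : ∀ p : M, ∃ a ∈ A, ∃ b ∈ B, p = a + b) (x y z : M) :
    mul (mul x y) z = 0 := by
  have h₃ : ∀ x y z, x ∈ A ∨ x ∈ B → y ∈ A ∨ y ∈ B → mul (mul x y) z = 0 :=
    fun x y z hx hy => LinearMap.eq_zero_of_forall_mem_or_mem hsum (mul (mul x y))
      (fun _ hz => mul_mul_eq_zero_of_mem_or_mem mul hcomm hassoc hA hB hx hy hz) z
  have h₂ : ∀ x y z, x ∈ A ∨ x ∈ B → mul (mul x y) z = 0 :=
    fun x y z hx => LinearMap.eq_zero_of_forall_mem_or_mem hsum ((mul.flip z).comp (mul x))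
      (fun y hy => h₃ x y z hx hy) y
  exact LinearMap.eq_zero_of_forall_mem_or_mem hsum ((mul.flip z).comp (mul.flip y))
    (fun x hx => h₂ x y z hx) x

end

theorem stmt_15_general (F : Type*) [Field F]
    (P : Type*) [AddCommGroup P] [Module F P]
    (mul br : P →ₗ[F] P →ₗ[F] P)
    (hcomm : ∀ a b : P, mul a b = mul b a)
    (hassoc : ∀ a b c : P, mul (mul a b) c = mul a (mul b c))
    (A B : Submodule F P)
    (hA : ∀ x ∈ A, ∀ y ∈ A, mul x y = 0 ∧ br x y = 0)
    (hB : ∀ x ∈ B, ∀ y ∈ B, mul x y = 0 ∧ br x y = 0)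
    (hsum : ∀ p : P, ∃ a ∈ A, ∃ b ∈ B, p = a + b)
    :
    ∀ c₁ c₂ c₃ c₄ : P, br (mul (mul c₁ c₂) c₃) c₄ = 0 := by
  intro c₁ c₂ c₃ c₄
  have hcube : mul (mul c₁ c₂) c₃ = 0 :=
    mul_mul_eq_zero_of_forall_eq_add mul hcomm hassoc (A := A) (B := B)
      (fun x hx y hy => (hA x hx y hy).1) (fun x hx y hy => (hB x hx y hy).1) hsum c₁ c₂ c₃
  rw [hcube, map_zero, LinearMap.zero_apply]

theorem stmt_15 (F : Type*) [Field F] [CharZero F]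
    (P : Type*) [AddCommGroup P] [Module F P]
    (mul br : P →ₗ[F] P →ₗ[F] P) (D : P →ₗ[F] P)
    (hcomm : ∀ a b : P, mul a b = mul b a)
    (hassoc : ∀ a b c : P, mul (mul a b) c = mul a (mul b c))
    (hanti : ∀ a b : P, br a b = - br b a)
    (hjac : ∀ a b c : P, br (br a b) c + br (br b c) a + br (br c a) b = 0)
    (hDmul : ∀ a b : P, D (mul a b) = mul (D a) b + mul a (D b))
    (hDbr : ∀ a b : P, D (br a b) = br (D a) b + br a (D b))
    (hGP : ∀ a b c : P, br (mul a b) c =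
      mul a (br b c) + mul (br a c) b + mul (mul a b) (D c))
    (A B : Submodule F P)
    (hA : ∀ x ∈ A, ∀ y ∈ A, mul x y = 0 ∧ br x y = 0)
    (hB : ∀ x ∈ B, ∀ y ∈ B, mul x y = 0 ∧ br x y = 0)
    (hsum : ∀ p : P, ∃ a ∈ A, ∃ b ∈ B, p = a + b)
    :
    ∀ c₁ c₂ c₃ c₄ : P, br (mul (mul c₁ c₂) c₃) c₄ = 0 :=
  stmt_15_general F P mul br hcomm hassoc A B hA hB hsum
end
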